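/- Let L be a PG-lattice, M a faithful multiplication PG-lattice L-module with I_M compact, δ_L an expansion function on L, and N a proper element of M. Then the following are equivalent: (1) N is a δ_L-primary element of M; (2) (N:I_M) is a δ_L-primary element of L; (3) N = qI_M for some δ_L-primary element q ∈ L. -/

import Mathlib

open CompleteLattice

universe u v

/-- A multiplicative lattice: a complete lattice with a commutative, associative
multiplication distributing over arbitrary joins, whose top element is the
multiplicative identity. -/
class MultiplicativeLattice (L : Type u) extends CompleteLattice L, CommMonoid L where
  one_eq_top : (1 : L) = ⊤
  sSup_mul : ∀ (S : Set L) (b : L), sSup S * b = ⨆ a ∈ S, a * b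

/-- A lattice module over a multiplicative lattice. -/
class LatticeModule (L : Type u) [MultiplicativeLattice L] (M : Type v)
    extends CompleteLattice M, SMul L M where
  sSup_smul : ∀ (S : Set L) (A : M), (SupSet.sSup S : L) • A = ⨆ a ∈ S, a • A
  smul_sSup : ∀ (a : L) (S : Set M), a • sSup S = ⨆ B ∈ S, a • B
  mul_smul : ∀ (a b : L) (A : M), (a * b) • A = a • b • A
  one_smul : ∀ A : M, (1 : L) • A = A
  bot_smul : ∀ A : M, (⊥ : L) • A = (⊥ : M)

section LatticeDefs

variable {L : Type u} [MultiplicativeLattice L]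

/-- The residual `(a : b)` in `L`. -/
def lColon (a b : L) : L := sSup {x : L | x * b ≤ a}

/-- The radical `√a` of an element of `L`. -/
def radL (a : L) : L :=
  sSup {x : L | IsCompactElement x ∧ ∃ n : ℕ, 1 ≤ n ∧ x ^ n ≤ a}

/-- A principal element of a multiplicative lattice (meet principal and join principal). -/
def IsPrincipalElemL (e : L) : Prop :=
  (∀ a b : L, a ⊓ b * e = (lColon a e ⊓ b) * e) ∧
  (∀ a b : L, lColon (a * e ⊔ b) e = lColon b e ⊔ a)

/-- An expansion function on `L`. -/
def IsExpansionL (δ : L → L) : Prop :=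
  (∀ a : L, a ≤ δ a) ∧ ∀ a b : L, a ≤ b → δ a ≤ δ b

/-- A 2-absorbing element of `L`. -/
def Is2AbsorbingL (q : L) : Prop :=
  q < ⊤ ∧ ∀ a b c : L, a * b * c ≤ q → a * b ≤ q ∨ b * c ≤ q ∨ c * a ≤ q

/-- A 2-absorbing primary element of `L`. -/
def Is2AbsorbingPrimaryL (q : L) : Prop :=
  q < ⊤ ∧ ∀ a b c : L, a * b * c ≤ q → a * b ≤ q ∨ b * c ≤ radL q ∨ c * a ≤ radL q

/-- A `δL`-primary element of `L`. -/
def IsDeltaLPrimaryL (δL : L → L) (p : L) : Prop :=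
  p < ⊤ ∧ ∀ a b : L, a * b ≤ p → a ≤ p ∨ b ≤ δL p

end LatticeDefs

/-- `L` is a PG-lattice: every element is a join of principal elements. -/
def IsPGLattice (L : Type u) [MultiplicativeLattice L] : Prop :=
  ∀ a : L, a = sSup {e : L | IsPrincipalElemL e ∧ e ≤ a}

section ModuleDefs

variable (L : Type u) {M : Type v} [MultiplicativeLattice L] [LatticeModule L M]

/-- The element `(A : B)` of `L`, for `A B : M`. -/
def mColon (A B : M) : L := sSup {x : L | x • B ≤ A}

/-- The element `(N : a)` of `M`, for `N : M`, `a : L`. -/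
def resColon (N : M) (a : L) : M := sSup {X : M | a • X ≤ N}

/-- An expansion function on the `L`-module `M`. -/
def IsExpansionM (δ : M → M) : Prop :=
  (∀ A : M, A ≤ δ A) ∧ ∀ A B : M, A ≤ B → δ A ≤ δ B

/-- A `δ`-primary element of the `L`-module `M`. -/
def IsDeltaPrimaryM (δ : M → M) (P : M) : Prop :=
  P < ⊤ ∧ ∀ (a : L) (A : M), a • A ≤ P → A ≤ P ∨ a • (⊤ : M) ≤ δ P

/-- A prime element of the `L`-module `M`. -/
def IsPrimeM (P : M) : Prop :=
  P < ⊤ ∧ ∀ (a : L) (A : M), a • A ≤ P → A ≤ P ∨ a • (⊤ : M) ≤ P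

/-- A primary element of the `L`-module `M`. -/
def IsPrimaryM (P : M) : Prop :=
  P < ⊤ ∧ ∀ (a : L) (A : M), a • A ≤ P → A ≤ P ∨ ∃ n : ℕ, 1 ≤ n ∧ a ^ n • (⊤ : M) ≤ P

/-- A principal element of the `L`-module `M` (meet principal and join principal). -/
def IsPrincipalElemM (N : M) : Prop :=
  (∀ (b : L) (B : M), (b ⊓ mColon L B N) • N = b • N ⊓ B) ∧
  (∀ (b : L) (B : M), b ⊔ mColon L B N = mColon L (b • N ⊔ B) N)

/-- A maximal element of the `L`-module `M`. -/
def IsMaximalM (H : M) : Prop :=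
  H < ⊤ ∧ ∀ B : M, H ≤ B → B = H ∨ B = ⊤

/-- A meet prime element of the `L`-module `M`. -/
def IsMeetPrimeM (N : M) : Prop :=
  N < ⊤ ∧ ∀ A B : M, A ⊓ B ≤ N → A ≤ N ∨ B ≤ N

/-- The expansion function `δ₁` on a multiplication `L`-module `M`:
`δ₁(A) = (√(A : I_M)) I_M`. -/
def delta1 (A : M) : M := radL (mColon L A (⊤ : M)) • (⊤ : M)

/-- The expansion function `δ₂`: meet of all maximal elements above a proper element. -/
noncomputable def delta2 (A : M) : M := by
  classical exact if A = ⊤ then ⊤ else sInf {H : M | A ≤ H ∧ IsMaximalM L H}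

/-- A 2-absorbing primary element of the `L`-module `M`. -/
def Is2AbsorbingPrimaryM (Q : M) : Prop :=
  Q < ⊤ ∧ ∀ (a b : L) (N : M), (a * b) • N ≤ Q →
    a * b ≤ mColon L Q (⊤ : M) ∨
    b • N ≤ radL (mColon L Q (⊤ : M)) • (⊤ : M) ∨
    a • N ≤ radL (mColon L Q (⊤ : M)) • (⊤ : M)

/-- A `δL`-primary element of the `L`-module `M`, for an expansion function `δL` on `L`. -/
def IsDeltaLPrimaryM (δL : L → L) (P : M) : Prop :=
  P < ⊤ ∧ ∀ (a : L) (A : M), a • A ≤ P → A ≤ P ∨ a ≤ δL (mColon L P (⊤ : M))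

end ModuleDefs

/-- `M` is a PG-lattice `L`-module: every element is a join of principal elements. -/
def IsPGModule (L : Type u) (M : Type v) [MultiplicativeLattice L] [LatticeModule L M] : Prop :=
  ∀ N : M, N = sSup {E : M | IsPrincipalElemM L E ∧ E ≤ N}

/-- `M` is a multiplication `L`-module. -/
def IsMultiplicationModule (L : Type u) (M : Type v)
    [MultiplicativeLattice L] [LatticeModule L M] : Prop :=
  ∀ N : M, ∃ a : L, N = a • (⊤ : M)

/-- `M` is a faithful `L`-module: `(O_M : I_M) = 0`. -/
def IsFaithfulModule (L : Type u) (M : Type v)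
    [MultiplicativeLattice L] [LatticeModule L M] : Prop :=
  mColon L (⊥ : M) (⊤ : M) = (⊥ : L)

/-!
In a faithful multiplication PG-module with `I_M` compact, `a ↦ a I_M` is an order embedding
`L → M`. Write `I_M` as a finite join of principal elements `X = (X : I_M) I_M`: a Nakayama
argument for finitely many principal elements gives `⋁ (X : I_M) = 1`, and join-principality of
`X` together with faithfulness gives `d (X : I_M) ≤ a` whenever `d I_M ≤ a I_M`. Hence
`(q I_M : I_M) = q`, so `δ_L`-primality passes back and forth between `N = (N : I_M) I_M` and
`(N : I_M)`.
-/

namespace MultiplicativeLattice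

variable {L : Type u} [MultiplicativeLattice L]

instance : IsQuantale L where
  mul_sSup_distrib x s := by simp only [mul_comm x, sSup_mul]
  sSup_mul_distrib := sSup_mul

theorem le_one (a : L) : a ≤ 1 :=
  one_eq_top (L := L) ▸ le_top

theorem sup_mul_eq_one {m a b : L} (ha : m ⊔ a = 1) (hb : m ⊔ b = 1) : m ⊔ a * b = 1 := by
  refine le_antisymm (le_one _) ?_
  calc (1 : L) = (m ⊔ a) * (m ⊔ b) := by rw [ha, hb, one_mul]
    _ = m * m ⊔ m * b ⊔ (a * m ⊔ a * b) := by
      rw [Quantale.sup_mul_distrib, Quantale.mul_sup_distrib, Quantale.mul_sup_distrib]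
    _ ≤ m ⊔ a * b :=
      sup_le (sup_le (le_sup_of_le_left (mul_le_of_le_one_right' (le_one m)))
          (le_sup_of_le_left (mul_le_of_le_one_right' (le_one b))))
        (sup_le (le_sup_of_le_left (mul_le_of_le_one_left' (le_one a))) le_sup_right)

end MultiplicativeLattice

open MultiplicativeLattice

section Module

variable {L : Type u} {M : Type v} [MultiplicativeLattice L] [LatticeModule L M]

instance : MulAction L M where
  one_smul := LatticeModule.one_smul
  mul_smul := LatticeModule.mul_smul

theorem sup_smul (a b : L) (A : M) : (a ⊔ b) • A = a • A ⊔ b • A := by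
  have h := LatticeModule.sSup_smul {a, b} A
  rw [sSup_pair] at h
  simpa [iSup_or, iSup_sup_eq] using h

theorem smul_sup (a : L) (A B : M) : a • (A ⊔ B) = a • A ⊔ a • B := by
  have h := LatticeModule.smul_sSup a {A, B}
  rw [sSup_pair] at h
  simpa [iSup_or, iSup_sup_eq] using h

theorem smul_bot (a : L) : a • (⊥ : M) = ⊥ := by
  simpa using LatticeModule.smul_sSup a (∅ : Set M)

instance : CovariantClass L M (· • ·) (· ≤ ·) where
  elim a A B h := show a • A ≤ a • B by rw [← sup_eq_right.mpr h, smul_sup]; exact le_sup_left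

theorem smul_mono_left {a b : L} (h : a ≤ b) (A : M) : a • A ≤ b • A := by
  rw [← sup_eq_right.mpr h, sup_smul]; exact le_sup_left

theorem smul_le_self (a : L) (A : M) : a • A ≤ A := by
  simpa using smul_mono_left (le_one a) A

theorem smul_left_comm (a b : L) (A : M) : a • b • A = b • a • A := by
  rw [← mul_smul, mul_comm, mul_smul]

theorem finset_sup_smul {ι : Type*} (T : Finset ι) (f : ι → L) (A : M) :
    T.sup f • A = T.sup fun i => f i • A :=
  Finset.apply_sup_eq_sup_comp (· • A) (fun a b => sup_smul a b A) (LatticeModule.bot_smul A)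

end Module

section Colon

variable {L : Type u} {M : Type v} [MultiplicativeLattice L] [LatticeModule L M]

theorem mColon_smul_le (A B : M) : mColon L A B • B ≤ A := by
  rw [mColon, LatticeModule.sSup_smul]
  exact iSup₂_le fun _ hx => hx

theorem le_mColon {x : L} {A B : M} (h : x • B ≤ A) : x ≤ mColon L A B := le_sSup h

theorem le_sup_mColon_bot_of_smul_le {X : M} (hX : IsPrincipalElemM L X) {d a : L}
    (h : d • X ≤ a • X) : d ≤ a ⊔ mColon L ⊥ X := by
  rw [hX.2, sup_bot_eq]
  exact le_mColon h

theorem IsMultiplicationModule.eq_mColon_top_smul (hmult : IsMultiplicationModule L M) (N : M) :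
    N = mColon L N (⊤ : M) • ⊤ := by
  obtain ⟨b, hb⟩ := hmult N
  exact le_antisymm (hb.le.trans (smul_mono_left (le_mColon hb.ge) ⊤)) (mColon_smul_le N ⊤)

theorem IsFaithfulModule.eq_bot_of_smul_top_eq_bot (hfaith : IsFaithfulModule L M) {a : L}
    (h : a • (⊤ : M) = ⊥) : a = ⊥ :=
  le_bot_iff.mp (hfaith ▸ le_mColon h.le)

end Colon

section Nakayama

variable {L : Type u} {M : Type v} [MultiplicativeLattice L] [LatticeModule L M]

theorem exists_sup_eq_one_smul_eq_bot {m : L} (T : Finset M)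
    (hT : ∀ X ∈ T, IsPrincipalElemM L X) {w : L} (hw : m ⊔ w = 1)
    (h : w • T.sup id ≤ m • T.sup id) : ∃ u : L, m ⊔ u = 1 ∧ u • T.sup id = ⊥ := by
  classical
  induction T using Finset.induction_on generalizing w with
  | empty => exact ⟨1, le_antisymm (le_one _) le_sup_right, by simp [smul_bot]⟩
  | @insert e T _ ih =>
    set Y := T.sup id
    rw [Finset.sup_insert, id, smul_sup, smul_sup] at h
    -- Peel off `e`: join-principality gives `w ≤ m ⊔ v` with `v e ≤ m Y`, so `v w` works for `T`.
    set v := mColon L (m • Y) e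
    have hve : v • e ≤ m • Y := mColon_smul_le _ _
    have hwv : w ≤ m ⊔ v := by
      rw [(hT e (Finset.mem_insert_self e T)).2]
      exact le_mColon (le_sup_left.trans h)
    have hmv : m ⊔ v = 1 := le_antisymm (le_one _) (hw ▸ sup_le le_sup_left hwv)
    have hvwY : (v * w) • Y ≤ m • Y :=
      calc (v * w) • Y = v • w • Y := mul_smul v w Y
        _ ≤ v • (m • e ⊔ m • Y) := smul_mono_right v (le_sup_right.trans h)
        _ = m • v • e ⊔ v • m • Y := by rw [smul_sup, smul_left_comm v m e]
        _ ≤ m • Y :=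
          sup_le ((smul_mono_right m hve).trans (smul_le_self m _)) (smul_le_self v _)
    obtain ⟨u, hmu, huY⟩ :=
      ih (fun X hX => hT X (Finset.mem_insert_of_mem hX)) (sup_mul_eq_one hmv hw) hvwY
    refine ⟨u * (v * w), sup_mul_eq_one hmu (sup_mul_eq_one hmv hw), le_bot_iff.mp ?_⟩
    rw [Finset.sup_insert, id, smul_sup]
    refine sup_le ?_ (by rw [mul_comm, mul_smul, huY, smul_bot])
    calc (u * (v * w)) • e = (u * w) • v • e := by rw [← mul_smul]; ac_rfl
      _ ≤ (u * w) • m • Y := smul_mono_right _ hve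
      _ = (w * m) • u • Y := by rw [← mul_smul, ← mul_smul]; ac_rfl
      _ = ⊥ := by rw [huY, smul_bot]

end Nakayama

section Cancellation

variable {L : Type u} {M : Type v} [MultiplicativeLattice L] [LatticeModule L M]

theorem exists_finset_principal_sup_eq_top (hPGM : IsPGModule L M)
    (htop : IsCompactElement (⊤ : M)) :
    ∃ T : Finset M, (∀ X ∈ T, IsPrincipalElemM L X) ∧ T.sup id = ⊤ := by
  obtain ⟨T, hTsub, hTtop⟩ :=
    (isCompactElement_iff_exists_le_sSup_of_le_sSup M _).mp htop _ (hPGM ⊤).le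
  exact ⟨T, fun X hX => (hTsub hX).1, top_le_iff.mp hTtop⟩

theorem finset_sup_mColon_top_eq_one (hmult : IsMultiplicationModule L M)
    (hfaith : IsFaithfulModule L M) {T : Finset M} (hT : ∀ X ∈ T, IsPrincipalElemM L X)
    (hTtop : T.sup id = ⊤) : T.sup (fun X => mColon L X (⊤ : M)) = 1 := by
  set c := T.sup fun X => mColon L X (⊤ : M)
  have hc : c • (⊤ : M) = ⊤ := by
    refine top_le_iff.mp ?_
    calc (⊤ : M) = T.sup id := hTtop.symm
      _ ≤ T.sup fun X => mColon L X (⊤ : M) • ⊤ :=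
          Finset.sup_mono_fun fun X _ => (hmult.eq_mColon_top_smul X).le
      _ = c • ⊤ := (finset_sup_smul T _ ⊤).symm
  obtain ⟨u, hcu, hu⟩ := exists_sup_eq_one_smul_eq_bot (w := 1) T hT
    (sup_eq_right.mpr (le_one c)) (by rw [hTtop, one_smul, hc])
  rw [hTtop] at hu
  rwa [hfaith.eq_bot_of_smul_top_eq_bot hu, sup_bot_eq] at hcu

theorem mul_mColon_top_le_of_smul_top_le (hmult : IsMultiplicationModule L M)
    (hfaith : IsFaithfulModule L M) {X : M} (hX : IsPrincipalElemM L X) {d a : L}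
    (h : d • (⊤ : M) ≤ a • ⊤) : d * mColon L X ⊤ ≤ a := by
  set c := mColon L X (⊤ : M)
  have hXc : X = c • ⊤ := hmult.eq_mColon_top_smul X
  have hdX : d • X ≤ a • X := by
    rw [hXc, smul_left_comm d, smul_left_comm a]
    exact smul_mono_right c h
  have hann : mColon L ⊥ X * c = ⊥ := by
    refine hfaith.eq_bot_of_smul_top_eq_bot (le_bot_iff.mp ?_)
    rw [mul_smul, ← hXc]
    exact mColon_smul_le ⊥ X
  calc d * c ≤ (a ⊔ mColon L ⊥ X) * c := mul_le_mul_left (le_sup_mColon_bot_of_smul_le hX hdX) c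
    _ = a * c := by rw [Quantale.sup_mul_distrib, hann, sup_bot_eq]
    _ ≤ a := mul_le_of_le_one_right' (le_one c)

theorem le_of_smul_top_le_smul_top (hPGM : IsPGModule L M) (hmult : IsMultiplicationModule L M)
    (hfaith : IsFaithfulModule L M) (htop : IsCompactElement (⊤ : M)) {d a : L}
    (h : d • (⊤ : M) ≤ a • ⊤) : d ≤ a := by
  obtain ⟨T, hT, hTtop⟩ := exists_finset_principal_sup_eq_top hPGM htop
  calc d = d * T.sup (fun X => mColon L X (⊤ : M)) := by
        rw [finset_sup_mColon_top_eq_one hmult hfaith hT hTtop, mul_one]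
    _ = T.sup (fun X => d * mColon L X (⊤ : M)) :=
        Finset.apply_sup_eq_sup_comp (d * ·) (fun _ _ => Quantale.mul_sup_distrib) Quantale.mul_bot
    _ ≤ a := Finset.sup_le fun X hX => mul_mColon_top_le_of_smul_top_le hmult hfaith (hT X hX) h

theorem mColon_smul_top_top (hPGM : IsPGModule L M) (hmult : IsMultiplicationModule L M)
    (hfaith : IsFaithfulModule L M) (htop : IsCompactElement (⊤ : M)) (q : L) :
    mColon L (q • (⊤ : M)) ⊤ = q :=
  le_antisymm (le_of_smul_top_le_smul_top hPGM hmult hfaith htop (mColon_smul_le _ _))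
    (le_mColon le_rfl)

end Cancellation

section DeltaPrimary

variable {L : Type u} {M : Type v} [MultiplicativeLattice L] [LatticeModule L M] {δL : L → L}

theorem IsDeltaLPrimaryM.isDeltaLPrimaryL_mColon_top {N : M} (hN : IsDeltaLPrimaryM L δL N) :
    IsDeltaLPrimaryL δL (mColon L N (⊤ : M)) := by
  refine ⟨lt_top_iff_ne_top.mpr fun htop => hN.1.not_ge ?_, fun a b hab => ?_⟩
  · simpa [← one_eq_top (L := L), htop] using mColon_smul_le (L := L) N (⊤ : M)
  · have hba : b • a • (⊤ : M) ≤ N := by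
      rw [← mul_smul, mul_comm]
      exact (smul_mono_left hab ⊤).trans (mColon_smul_le N (⊤ : M))
    exact (hN.2 b _ hba).imp_left le_mColon

theorem IsDeltaLPrimaryL.isDeltaLPrimaryM_smul_top (hPGM : IsPGModule L M)
    (hmult : IsMultiplicationModule L M) (hfaith : IsFaithfulModule L M)
    (htop : IsCompactElement (⊤ : M)) {q : L} (hq : IsDeltaLPrimaryL δL q) :
    IsDeltaLPrimaryM L δL (q • (⊤ : M)) := by
  have hcancel {d a : L} : d • (⊤ : M) ≤ a • ⊤ → d ≤ a :=
    le_of_smul_top_le_smul_top hPGM hmult hfaith htop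
  refine ⟨lt_top_iff_ne_top.mpr fun hqtop => hq.1.not_ge ?_, fun a A haA => ?_⟩
  · exact one_eq_top (L := L) ▸ hcancel (by rw [one_smul, hqtop])
  · rw [mColon_smul_top_top hPGM hmult hfaith htop, hmult.eq_mColon_top_smul A]
    rw [hmult.eq_mColon_top_smul A, ← mul_smul] at haA
    exact (hq.2 _ a (mul_comm a _ ▸ hcancel haA)).imp_left (smul_mono_left · ⊤)

end DeltaPrimary

theorem stmt19_general {L : Type u} {M : Type v} [MultiplicativeLattice L] [LatticeModule L M]
    (hPGM : IsPGModule L M)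
    (hmult : IsMultiplicationModule L M) (hfaith : IsFaithfulModule L M)
    (htop : IsCompactElement (⊤ : M))
    (δL : L → L)
    (N : M) :
    List.TFAE [IsDeltaLPrimaryM L δL N,
      IsDeltaLPrimaryL δL (mColon L N (⊤ : M)),
      ∃ q : L, IsDeltaLPrimaryL δL q ∧ N = q • (⊤ : M)] := by
  tfae_have 1 → 2 := IsDeltaLPrimaryM.isDeltaLPrimaryL_mColon_top
  tfae_have 2 → 3 := fun h => ⟨_, h, hmult.eq_mColon_top_smul N⟩
  tfae_have 3 → 1 := by
    rintro ⟨q, hq, rfl⟩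
    exact hq.isDeltaLPrimaryM_smul_top hPGM hmult hfaith htop
  tfae_finish

theorem stmt19 {L : Type u} {M : Type v} [MultiplicativeLattice L] [LatticeModule L M]
    [IsCompactlyGenerated L]
    (h1cpt : IsCompactElement (1 : L))
    (hmulcpt : ∀ a b : L, IsCompactElement a → IsCompactElement b → IsCompactElement (a * b))
    (hPGL : IsPGLattice L) (hPGM : IsPGModule L M)
    (hmult : IsMultiplicationModule L M) (hfaith : IsFaithfulModule L M)
    (htop : IsCompactElement (⊤ : M))
    (δL : L → L) (hδL : IsExpansionL δL)
    (N : M) (hN : N < ⊤) :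
    List.TFAE [IsDeltaLPrimaryM L δL N,
      IsDeltaLPrimaryL δL (mColon L N (⊤ : M)),
      ∃ q : L, IsDeltaLPrimaryL δL q ∧ N = q • (⊤ : M)] :=
  stmt19_general hPGM hmult hfaith htop δL N
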